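/- Let I=⟨A,A?,R,R?⟩ be an incomplete argumentation framework, S⊆A∪A? a set of arguments, j a verification status, w an argument with w∉A∪A?, and I_att=⟨A∪A?∪{w}, ∅, R, R?∪{(w,a) | a∈A?}⟩. Then for every uncertain attack e∈R?: e∈RE⁺(I,S,j) if and only if e∈RE⁺(I_att,S∪{w},j), and e∈RE⁻(I,S,j) if and only if e∈RE⁻(I_att,S∪{w},j). -/

import Mathlib

/-!
Since `w` is unattacked, the σ-extensions of an AF that contain `w` are exactly the sets
`insert w T` with `T` a σ-extension of the reduct by `w` (the AF without `w` and the arguments it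
attacks). For a partial completion of `I_att` whose only uncertain element is `e`, the reducts by
`w` of its two completions (with and without `e`) are the two completions of a partial completion
of `I` of the same kind, whose arguments are those `w` does not attack. Conversely every such
partial completion of `I` arises in this way, by letting `w` attack exactly the missing arguments.
The only partial completions of `I_att` without a counterpart are those in which `w` attacks an
endpoint of `e`; there `e` vanishes in the reduct, so it is not relevant.
-/

universe u

/-- An abstract argumentation framework: a set of arguments with an attack relation. -/
structure AF (α : Type u) where
  args : Set α
  att : Set (α × α)

namespace AF

variable {α : Type u}

/-- `S⁺_F`: arguments attacked by `S`. -/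
def plusSet (F : AF α) (S : Set α) : Set α := {a | a ∈ F.args ∧ ∃ b ∈ S, (b, a) ∈ F.att}

/-- `S⁻_F`: arguments attacking `S`. -/
def minusSet (F : AF α) (S : Set α) : Set α := {a | a ∈ F.args ∧ ∃ b ∈ S, (a, b) ∈ F.att}

/-- `S` is conflict-free in `F`. -/
def confFree (F : AF α) (S : Set α) : Prop := S ∩ F.plusSet S = ∅

/-- `S` defends `a` in `F`: every attacker of `a` is attacked by `S`. -/
def defends (F : AF α) (S : Set α) (a : α) : Prop := ∀ b, (b, a) ∈ F.att → b ∈ F.plusSet S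

/-- The characteristic function `Γ_F(S)`: arguments defended by `S`. -/
def Γ (F : AF α) (S : Set α) : Set α := {a | a ∈ F.args ∧ F.defends S a}

/-- Admissible: conflict-free and self-defending. -/
def isAd (F : AF α) (S : Set α) : Prop := S ⊆ F.args ∧ F.confFree S ∧ S ⊆ F.Γ S

/-- Stable: conflict-free and attacking exactly the outside. -/
def isSt (F : AF α) (S : Set α) : Prop := S ⊆ F.args ∧ F.confFree S ∧ F.plusSet S = F.args \ S

/-- Complete: admissible and containing all defended arguments. -/
def isCo (F : AF α) (S : Set α) : Prop := F.isAd S ∧ F.Γ S ⊆ S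

/-- Grounded: ⊆-minimal complete. -/
def isGr (F : AF α) (S : Set α) : Prop := F.isCo S ∧ ∀ T, F.isCo T → T ⊆ S → T = S

/-- Preferred: ⊆-maximal admissible. -/
def isPr (F : AF α) (S : Set α) : Prop := F.isAd S ∧ ∀ T, F.isAd T → S ⊆ T → S = T

end AF

/-- The five common semantics. -/
inductive Sem : Type
  | ad | st | co | gr | pr
deriving DecidableEq

/-- `S` is a `σ`-extension of `F`. -/
def extOf {α : Type u} : Sem → AF α → Set α → Prop
  | .ad => AF.isAd
  | .st => AF.isSt
  | .co => AF.isCo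
  | .gr => AF.isGr
  | .pr => AF.isPr

/-- An incomplete argumentation framework (data part). -/
structure IAF (α : Type u) where
  A : Set α
  Aq : Set α
  R : Set (α × α)
  Rq : Set (α × α)

namespace IAF

variable {α : Type u}

/-- Well-formedness: `A`,`A?` disjoint; `R`,`R?` disjoint subsets of `(A∪A?)×(A∪A?)`. -/
def WF (I : IAF α) : Prop :=
  Disjoint I.A I.Aq ∧ Disjoint I.R I.Rq ∧
  I.R ⊆ (I.A ∪ I.Aq) ×ˢ (I.A ∪ I.Aq) ∧
  I.Rq ⊆ (I.A ∪ I.Aq) ×ˢ (I.A ∪ I.Aq)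

/-- `cert(I)`: the AF projected on the certain part. -/
def cert (I : IAF α) : AF α := ⟨I.A, I.R ∩ I.A ×ˢ I.A⟩

/-- `I'` is a partial completion of `I`. -/
def PartOf (I' I : IAF α) : Prop :=
  I'.WF ∧ I.A ⊆ I'.A ∧ I'.A ⊆ I.A ∪ I.Aq ∧
  I.R ∩ (I'.A ∪ I'.Aq) ×ˢ (I'.A ∪ I'.Aq) ⊆ I'.R ∧
  I'.R ⊆ I.R ∪ I.Rq ∧ I'.Aq ⊆ I.Aq ∧ I'.Rq ⊆ I.Rq

/-- `F` is a completion of `I`. -/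
def IsCompletion (I : IAF α) (F : AF α) : Prop := ∃ I' : IAF α, I'.PartOf I ∧ F = I'.cert

/-- `I + R₀` for a set of uncertain attacks. -/
def addR (I : IAF α) (R0 : Set (α × α)) : IAF α := ⟨I.A, I.Aq, I.R ∪ R0, I.Rq \ R0⟩

/-- `I − R₀` for a set of uncertain attacks. -/
def subR (I : IAF α) (R0 : Set (α × α)) : IAF α := ⟨I.A, I.Aq, I.R, I.Rq \ R0⟩

/-- `I + A₀` for a set of uncertain arguments. -/
def addA (I : IAF α) (A0 : Set α) : IAF α := ⟨I.A ∪ A0, I.Aq \ A0, I.R, I.Rq⟩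

/-- `I − A₀` for a set of uncertain arguments. -/
def subA (I : IAF α) (A0 : Set α) : IAF α :=
  ⟨I.A, I.Aq \ A0,
   I.R \ {p | p ∈ I.R ∪ I.Rq ∧ (p.1 ∈ A0 ∨ p.2 ∈ A0)},
   I.Rq \ {p | p ∈ I.R ∪ I.Rq ∧ (p.1 ∈ A0 ∨ p.2 ∈ A0)}⟩

/-- `S⁺_I`. -/
def plusI (I : IAF α) (S : Set α) : Set α := {a | a ∈ I.A ∪ I.Aq ∧ ∃ b ∈ S, (b, a) ∈ I.R}

/-- `S⁻_I`. -/
def minusI (I : IAF α) (S : Set α) : Set α := {a | a ∈ I.A ∪ I.Aq ∧ ∃ b ∈ S, (a, b) ∈ I.R}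

/-- `S^∼_I`. -/
def simI (I : IAF α) (S : Set α) : Set α :=
  {a | a ∈ I.A ∪ I.Aq ∧ ∀ b ∈ S, (b, a) ∉ I.R ∪ I.Rq}

end IAF

/-- An element of an IAF: either an argument or an attack. -/
inductive Elem (α : Type u) : Type u
  | arg (a : α)
  | att (r : α × α)

/-- `e` is an uncertain element of `I`, i.e. `e ∈ A? ∪ R?`. -/
def IAF.isUnc {α : Type u} (I : IAF α) : Elem α → Prop
  | .arg a => a ∈ I.Aq
  | .att r => r ∈ I.Rq

/-- `I + {e}`. -/
def IAF.addE {α : Type u} (I : IAF α) : Elem α → IAF α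
  | .arg a => I.addA {a}
  | .att r => I.addR {r}

/-- `I − {e}`. -/
def IAF.subE {α : Type u} (I : IAF α) : Elem α → IAF α
  | .arg a => I.subA {a}
  | .att r => I.subR {r}

/-- `e` is the unique uncertain element of `I`, i.e. `A? ∪ R? = {e}`. -/
def onlyUnc {α : Type u} (I : IAF α) : Elem α → Prop
  | .arg a => I.Aq = {a} ∧ I.Rq = ∅
  | .att r => I.Aq = ∅ ∧ I.Rq = {r}

/-- A verification status: a semantics together with true/false. -/
abbrev VStatus := Sem × Bool

/-- `S` has verification status `j` in the AF `F`. -/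
def hasStatus {α : Type u} (F : AF α) (S : Set α) (j : VStatus) : Prop :=
  cond j.2 (extOf j.1 F S) (¬ extOf j.1 F S)

/-- `S` is stable-`j` w.r.t. `I`. -/
def IAF.stableJ {α : Type u} (I : IAF α) (S : Set α) (j : VStatus) : Prop :=
  ∀ F, I.IsCompletion F → hasStatus F S j

/-- `S` is stable-`σ` w.r.t. `I`. -/
def IAF.stableSem {α : Type u} (I : IAF α) (S : Set α) (σ : Sem) : Prop :=
  I.stableJ S (σ, true) ∨ I.stableJ S (σ, false)

/-- `RE⁺(I,S,j)`: uncertain elements whose addition is `j`-relevant for `S` w.r.t. `I`. -/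
def REplus {α : Type u} (I : IAF α) (S : Set α) (j : VStatus) : Set (Elem α) :=
  {e | I.isUnc e ∧ ∃ I' : IAF α, I'.PartOf I ∧ onlyUnc I' e ∧
    hasStatus (I'.addE e).cert S j ∧ ¬ hasStatus (I'.subE e).cert S j}

/-- `RE⁻(I,S,j)`: uncertain elements whose removal is `j`-relevant for `S` w.r.t. `I`. -/
def REminus {α : Type u} (I : IAF α) (S : Set α) (j : VStatus) : Set (Elem α) :=
  {e | I.isUnc e ∧ ∃ I' : IAF α, I'.PartOf I ∧ onlyUnc I' e ∧
    hasStatus (I'.subE e).cert S j ∧ ¬ hasStatus (I'.addE e).cert S j}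

/-- `e` is `σ`-irrelevant for `S` w.r.t. `I`. -/
def irrelevant {α : Type u} (I : IAF α) (S : Set α) (σ : Sem) (e : Elem α) : Prop :=
  e ∉ REplus I S (σ, true) ∧ e ∉ REminus I S (σ, true) ∧
  e ∉ REplus I S (σ, false) ∧ e ∉ REminus I S (σ, false)

/-- `PosVer_σ(I,S) = true`. -/
def PosVer {α : Type u} (σ : Sem) (I : IAF α) (S : Set α) : Prop :=
  ∃ F, I.IsCompletion F ∧ extOf σ F S

/-- `NecVer_σ(I,S) = true`. -/
def NecVer {α : Type u} (σ : Sem) (I : IAF α) (S : Set α) : Prop :=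
  ∀ F, I.IsCompletion F → extOf σ F S

/-- `SRE⁺(I,S,j)`: uncertain elements whose addition is strongly `j`-relevant. -/
def SREplus {α : Type u} (I : IAF α) (S : Set α) (j : VStatus) : Set (Elem α) :=
  {e | I.isUnc e ∧ ∀ I' : IAF α, I'.PartOf (I.subE e) → ¬ I'.stableJ S j}

/-- `SRE⁻(I,S,j)`: uncertain elements whose removal is strongly `j`-relevant. -/
def SREminus {α : Type u} (I : IAF α) (S : Set α) (j : VStatus) : Set (Elem α) :=
  {e | I.isUnc e ∧ ∀ I' : IAF α, I'.PartOf (I.addE e) → ¬ I'.stableJ S j}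

/-- The `OutRel(I,S,(a,b))` predicate. -/
def OutRel {α : Type u} (I : IAF α) (S : Set α) (r : α × α) : Prop :=
  (I.minusI {r.2} \ {r.1}) ∩ I.simI S = ∅ ∧
  PosVer Sem.co
    ((I.addR {p | p ∈ I.Rq ∧ p.1 ∈ S ∧ p.2 ∈ I.minusI {r.2} \ {r.1}}).subR
      {p | p ∈ I.Rq ∧ p.1 ≠ r.1 ∧ p.2 = r.2}) S

namespace AF

variable {α : Type u}

@[ext]
protected theorem ext {F G : AF α} (hargs : F.args = G.args) (hatt : F.att = G.att) : F = G := by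
  cases F; cases G; cases hargs; cases hatt; rfl

/-- The reduct `F^{w}` of Baumann, Brewka and Ulbricht. -/
def reduct (F : AF α) (w : α) : AF α :=
  let X := F.args \ insert w (F.plusSet {w})
  ⟨X, F.att ∩ X ×ˢ X⟩

variable {F : AF α} {w a : α} {S T : Set α}

@[simp]
theorem mem_reduct_args : a ∈ (F.reduct w).args ↔ a ∈ F.args ∧ a ≠ w ∧ (w, a) ∉ F.att := by
  simp only [reduct, plusSet, Set.mem_sdiff, Set.mem_insert_iff, Set.mem_ofPred_eq,
    Set.mem_singleton_iff, exists_eq_left, not_or, not_and]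
  tauto

theorem reduct_att : (F.reduct w).att = F.att ∩ (F.reduct w).args ×ˢ (F.reduct w).args :=
  rfl

theorem plusSet_subset_args : F.plusSet S ⊆ F.args := fun _ h => h.1

theorem Γ_subset_args : F.Γ S ⊆ F.args := fun _ h => h.1

theorem mem_plusSet_singleton : a ∈ F.plusSet {w} ↔ a ∈ F.args ∧ (w, a) ∈ F.att := by
  simp [plusSet]

theorem plusSet_insert (hwu : ∀ b, (b, w) ∉ F.att) (hT : T ⊆ (F.reduct w).args) :
    F.plusSet (insert w T) = (F.reduct w).plusSet T ∪ F.plusSet {w} := by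
  ext a
  simp only [plusSet, Set.mem_ofPred_eq, Set.mem_union, Set.mem_insert_iff,
    Set.mem_singleton_iff, exists_eq_or_imp, exists_eq_left, reduct_att, Set.mem_inter_iff,
    Set.mem_prod]
  constructor
  · rintro ⟨ha, hwa | ⟨b, hb, hba⟩⟩
    · exact .inr ⟨ha, hwa⟩
    by_cases hwa : (w, a) ∈ F.att
    · exact .inr ⟨ha, hwa⟩
    have haX : a ∈ (F.reduct w).args :=
      mem_reduct_args.2 ⟨ha, by rintro rfl; exact hwu b hba, hwa⟩
    exact .inl ⟨haX, b, hb, hba, hT hb, haX⟩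
  · rintro (⟨haX, b, hb, hba, -⟩ | ⟨ha, hwa⟩)
    · exact ⟨(mem_reduct_args.1 haX).1, .inr ⟨b, hb, hba⟩⟩
    · exact ⟨ha, .inl hwa⟩

theorem Γ_insert (hatt : F.att ⊆ F.args ×ˢ F.args) (hw : w ∈ F.args) (hwu : ∀ b, (b, w) ∉ F.att)
    (hT : T ⊆ (F.reduct w).args) :
    F.Γ (insert w T) = insert w ((F.reduct w).Γ T) := by
  ext a
  simp only [Γ, defends, Set.mem_insert_iff, Set.mem_ofPred_eq]
  rw [plusSet_insert hwu hT]
  constructor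
  · rintro ⟨ha, hdef⟩
    refine or_iff_not_imp_left.2 fun haw => ?_
    have hwa : (w, a) ∉ F.att := fun hwa => by
      rcases hdef w hwa with hw' | hw'
      · exact (mem_reduct_args.1 hw'.1).2.1 rfl
      · exact hwu w (mem_plusSet_singleton.1 hw').2
    refine ⟨mem_reduct_args.2 ⟨ha, haw, hwa⟩, fun b hba => ?_⟩
    refine (hdef b hba.1).resolve_right fun hwb => ?_
    exact (mem_reduct_args.1 hba.2.1).2.2 (mem_plusSet_singleton.1 hwb).2
  · rintro (rfl | ⟨haX, hdef⟩)
    · exact ⟨hw, fun b hb => absurd hb (hwu b)⟩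
    obtain ⟨ha, -, hwa⟩ := mem_reduct_args.1 haX
    refine ⟨ha, fun b hba => ?_⟩
    by_cases hwb : (w, b) ∈ F.att
    · exact .inr (mem_plusSet_singleton.2 ⟨(hatt hba).1, hwb⟩)
    · have hbX : b ∈ (F.reduct w).args :=
        mem_reduct_args.2 ⟨(hatt hba).1, by rintro rfl; exact hwa hba, hwb⟩
      exact .inl (hdef b ⟨hba, hbX, haX⟩)

theorem reduct_args_subset : (F.reduct w).args ⊆ F.args := fun _ ha => (mem_reduct_args.1 ha).1

theorem notMem_reduct_args : w ∉ (F.reduct w).args := fun h => (mem_reduct_args.1 h).2.1 rfl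

theorem disjoint_reduct_args_plusSet : Disjoint (F.reduct w).args (F.plusSet {w}) :=
  Set.disjoint_left.2 fun _ ha hP => (mem_reduct_args.1 ha).2.2 (mem_plusSet_singleton.1 hP).2

theorem mem_Γ_of_unattacked (hw : w ∈ F.args) (hwu : ∀ b, (b, w) ∉ F.att) : w ∈ F.Γ S :=
  ⟨hw, fun b hb => absurd hb (hwu b)⟩

theorem subset_reduct_args (hwT : w ∉ T) (hsub : insert w T ⊆ F.args)
    (hcf : F.confFree (insert w T)) : T ⊆ (F.reduct w).args := by
  intro a ha
  refine mem_reduct_args.2 ⟨hsub (.inr ha), by rintro rfl; exact hwT ha, fun hwa => ?_⟩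
  exact Set.eq_empty_iff_forall_notMem.1 hcf a ⟨.inr ha, hsub (.inr ha), w, .inl rfl, hwa⟩

theorem confFree_insert_iff (hwu : ∀ b, (b, w) ∉ F.att) (hT : T ⊆ (F.reduct w).args) :
    F.confFree (insert w T) ↔ (F.reduct w).confFree T := by
  unfold confFree
  rw [plusSet_insert hwu hT]
  simp only [Set.eq_empty_iff_forall_notMem, Set.mem_inter_iff, Set.mem_insert_iff,
    Set.mem_union, not_and]
  constructor
  · exact fun h a haT haP => h a (.inr haT) (.inl haP)
  · rintro h a (rfl | haT) (haP | haP)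
    · exact notMem_reduct_args (plusSet_subset_args haP)
    · exact hwu a (mem_plusSet_singleton.1 haP).2
    · exact h a haT haP
    · exact disjoint_reduct_args_plusSet.notMem_of_mem_left (hT haT) haP

theorem args_sdiff_insert (hwu : ∀ b, (b, w) ∉ F.att) (hT : T ⊆ (F.reduct w).args) :
    F.args \ insert w T = (F.reduct w).args \ T ∪ F.plusSet {w} := by
  ext a
  simp only [Set.mem_sdiff, Set.mem_insert_iff, Set.mem_union, mem_reduct_args,
    mem_plusSet_singleton, not_or]
  constructor
  · rintro ⟨ha, haw, haT⟩
    by_cases hwa : (w, a) ∈ F.att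
    · exact .inr ⟨ha, hwa⟩
    · exact .inl ⟨⟨ha, haw, hwa⟩, haT⟩
  · rintro (⟨⟨ha, haw, -⟩, haT⟩ | ⟨ha, hwa⟩)
    · exact ⟨ha, haw, haT⟩
    · refine ⟨ha, fun haw => by subst haw; exact hwu _ hwa, fun haT => ?_⟩
      exact (mem_reduct_args.1 (hT haT)).2.2 hwa

theorem isAd_insert_iff (hatt : F.att ⊆ F.args ×ˢ F.args) (hw : w ∈ F.args)
    (hwu : ∀ b, (b, w) ∉ F.att) (hwT : w ∉ T) :
    F.isAd (insert w T) ↔ (F.reduct w).isAd T := by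
  constructor
  · rintro ⟨hsub, hcf, hΓ⟩
    have hT := subset_reduct_args hwT hsub hcf
    rw [Γ_insert hatt hw hwu hT, Set.insert_subset_insert_iff hwT] at hΓ
    exact ⟨hT, (confFree_insert_iff hwu hT).1 hcf, hΓ⟩
  · rintro ⟨hT, hcf, hΓ⟩
    refine ⟨Set.insert_subset hw (hT.trans reduct_args_subset),
      (confFree_insert_iff hwu hT).2 hcf, ?_⟩
    rw [Γ_insert hatt hw hwu hT]
    exact Set.insert_subset_insert hΓ

theorem isCo_insert_iff (hatt : F.att ⊆ F.args ×ˢ F.args) (hw : w ∈ F.args)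
    (hwu : ∀ b, (b, w) ∉ F.att) (hwT : w ∉ T) :
    F.isCo (insert w T) ↔ (F.reduct w).isCo T := by
  unfold isCo
  rw [isAd_insert_iff hatt hw hwu hwT]
  refine and_congr_right fun had => ?_
  have hwΓ : w ∉ (F.reduct w).Γ T := fun h => notMem_reduct_args (Γ_subset_args h)
  rw [Γ_insert hatt hw hwu had.1, Set.insert_subset_insert_iff hwΓ]

theorem isSt_insert_iff (hw : w ∈ F.args) (hwu : ∀ b, (b, w) ∉ F.att) (hwT : w ∉ T) :
    F.isSt (insert w T) ↔ (F.reduct w).isSt T := by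
  have hdisj : ∀ {U}, U ⊆ (F.reduct w).args → Disjoint U (F.plusSet {w}) :=
    fun hU => disjoint_reduct_args_plusSet.mono_left hU
  constructor
  · rintro ⟨hsub, hcf, heq⟩
    have hT := subset_reduct_args hwT hsub hcf
    refine ⟨hT, (confFree_insert_iff hwu hT).1 hcf, ?_⟩
    rw [plusSet_insert hwu hT, args_sdiff_insert hwu hT] at heq
    have := congrArg (· \ F.plusSet {w}) heq
    simpa [(hdisj plusSet_subset_args).sdiff_eq_left,
      (hdisj Set.sdiff_subset).sdiff_eq_left] using this
  · rintro ⟨hT, hcf, heq⟩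
    refine ⟨Set.insert_subset hw (hT.trans reduct_args_subset),
      (confFree_insert_iff hwu hT).2 hcf, ?_⟩
    rw [plusSet_insert hwu hT, args_sdiff_insert hwu hT, heq]

theorem isGr_insert_iff (hatt : F.att ⊆ F.args ×ˢ F.args) (hw : w ∈ F.args)
    (hwu : ∀ b, (b, w) ∉ F.att) (hwT : w ∉ T) :
    F.isGr (insert w T) ↔ (F.reduct w).isGr T := by
  have hco := fun {V : Set α} (hwV : w ∉ V) => isCo_insert_iff hatt hw hwu hwV
  unfold isGr
  rw [hco hwT]
  refine and_congr_right fun _ => ⟨fun hmin V hV hVT => ?_, fun hmin V hV hVT => ?_⟩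
  · have hwV : w ∉ V := fun h => hwT (hVT h)
    have := hmin (insert w V) ((hco hwV).2 hV) (Set.insert_subset_insert hVT)
    rw [← Set.insert_sdiff_self_of_notMem hwV, this, Set.insert_sdiff_self_of_notMem hwT]
  · have hwV : w ∈ V := hV.2 (mem_Γ_of_unattacked hw hwu)
    rw [← Set.insert_sdiff_self_of_mem hwV] at hV ⊢
    rw [hmin _ ((hco (by simp)).1 hV) (Set.sdiff_singleton_subset_iff.2 hVT)]

theorem isPr_insert_iff (hatt : F.att ⊆ F.args ×ˢ F.args) (hw : w ∈ F.args)
    (hwu : ∀ b, (b, w) ∉ F.att) (hwT : w ∉ T) :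
    F.isPr (insert w T) ↔ (F.reduct w).isPr T := by
  have had := fun {V : Set α} (hwV : w ∉ V) => isAd_insert_iff hatt hw hwu hwV
  unfold isPr
  rw [had hwT]
  refine and_congr_right fun _ => ⟨fun hmax V hV hTV => ?_, fun hmax V hV hTV => ?_⟩
  · have hwV : w ∉ V := fun h => notMem_reduct_args (hV.1 h)
    have := hmax (insert w V) ((had hwV).2 hV) (Set.insert_subset_insert hTV)
    rw [← Set.insert_sdiff_self_of_notMem hwT, this, Set.insert_sdiff_self_of_notMem hwV]
  · have hwV : w ∈ V := hTV (Set.mem_insert w T)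
    rw [← Set.insert_sdiff_self_of_mem hwV] at hV ⊢
    have hTV' : T ⊆ V \ {w} :=
      Set.subset_sdiff_singleton ((Set.subset_insert w T).trans hTV) hwT
    rw [hmax _ ((had (by simp)).1 hV) hTV']

end AF

section Reduct

variable {α : Type u} {F : AF α} {w : α} {S : Set α}

theorem extOf_insert_iff (hatt : F.att ⊆ F.args ×ˢ F.args) (hw : w ∈ F.args)
    (hwu : ∀ b, (b, w) ∉ F.att) (hwS : w ∉ S) :
    ∀ σ, extOf σ F (insert w S) ↔ extOf σ (F.reduct w) S
  | .ad => AF.isAd_insert_iff hatt hw hwu hwS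
  | .st => AF.isSt_insert_iff hw hwu hwS
  | .co => AF.isCo_insert_iff hatt hw hwu hwS
  | .gr => AF.isGr_insert_iff hatt hw hwu hwS
  | .pr => AF.isPr_insert_iff hatt hw hwu hwS

theorem hasStatus_insert_iff (hatt : F.att ⊆ F.args ×ˢ F.args) (hw : w ∈ F.args)
    (hwu : ∀ b, (b, w) ∉ F.att) (hwS : w ∉ S) (j : VStatus) :
    hasStatus F (insert w S) j ↔ hasStatus (F.reduct w) S j := by
  obtain ⟨σ, _ | _⟩ := j
  · exact not_congr (extOf_insert_iff hatt hw hwu hwS σ)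
  · exact extOf_insert_iff hatt hw hwu hwS σ

end Reduct

namespace IAF

variable {α : Type u} {I J K : IAF α} {w : α} {e : α × α} {S : Set α} {j : VStatus}

theorem WF.mem_of_mem_attacks (hWF : I.WF) {p : α × α} (hp : p ∈ I.R ∪ I.Rq) :
    p.1 ∈ I.A ∪ I.Aq ∧ p.2 ∈ I.A ∪ I.Aq :=
  hp.elim (fun h => hWF.2.2.1 h) (fun h => hWF.2.2.2 h)

theorem PartOf.A_subset (h : J.PartOf I) : I.A ⊆ J.A := h.2.1

theorem PartOf.R_subset (h : J.PartOf I) : J.R ⊆ I.R ∪ I.Rq := h.2.2.2.2.1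

theorem cert_reduct_eq (hw : w ∈ K.A) (hA : J.A = {a | a ∈ K.A ∧ a ≠ w ∧ (w, a) ∉ K.R})
    (hR : K.R ∩ J.A ×ˢ J.A = J.R ∩ J.A ×ˢ J.A) : K.cert.reduct w = J.cert := by
  have hargs : (K.cert.reduct w).args = J.A := by
    ext a
    simp only [AF.mem_reduct_args, cert, hA, Set.mem_ofPred_eq, Set.mem_inter_iff,
      Set.mem_prod]
    exact and_congr_right fun ha => and_congr_right fun _ => by simp [hw, ha]
  ext1
  · exact hargs
  · rw [AF.reduct_att]
    change K.R ∩ K.A ×ˢ K.A ∩ _ = J.R ∩ J.A ×ˢ J.A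
    have hJK : J.A ×ˢ J.A ⊆ K.A ×ˢ K.A := by
      rw [hA]
      exact Set.prod_mono (fun _ h => h.1) (fun _ h => h.1)
    rw [hargs, Set.inter_assoc, Set.inter_eq_right.2 hJK, hR]

theorem cert_addR_reduct_eq {R₀ : Set (α × α)} (hw : w ∈ K.A)
    (hA : J.A = {a | a ∈ K.A ∧ a ≠ w ∧ (w, a) ∉ K.R})
    (hR : K.R ∩ J.A ×ˢ J.A = J.R ∩ J.A ×ˢ J.A) (h₀ : ∀ p ∈ R₀, p.1 ≠ w) :
    (K.addR R₀).cert.reduct w = (J.addR R₀).cert := by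
  refine cert_reduct_eq hw ?_ ?_
  · change J.A = {a | a ∈ K.A ∧ a ≠ w ∧ (w, a) ∉ K.R ∪ R₀}
    rw [hA]
    ext a
    simp only [Set.mem_ofPred_eq, Set.mem_union, not_or]
    exact and_congr_right fun _ => and_congr_right fun _ =>
      (and_iff_left fun h => h₀ _ h rfl).symm
  · simp only [addR, Set.union_inter_distrib_right, hR]

theorem cert_addR_of_notMem (he : e ∉ J.A ×ˢ J.A) : (J.addR {e}).cert = J.cert := by
  refine AF.ext rfl ?_
  change (J.R ∪ {e}) ∩ J.A ×ˢ J.A = J.R ∩ J.A ×ˢ J.A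
  rw [Set.union_inter_distrib_right, Set.singleton_inter_eq_empty.2 he, Set.union_empty]

theorem hasStatus_cert_insert_iff (hw : w ∈ K.A) (hwu : ∀ b, (b, w) ∉ K.R) (hwS : w ∉ S)
    (j : VStatus) : hasStatus K.cert (insert w S) j ↔ hasStatus (K.cert.reduct w) S j :=
  hasStatus_insert_iff (F := K.cert) Set.inter_subset_right hw (fun b h => hwu b h.1) hwS j

def reduct (K : IAF α) (w : α) : IAF α :=
  let X := {a | a ∈ K.A ∧ a ≠ w ∧ (w, a) ∉ K.R}
  ⟨X, K.Aq, K.R ∩ X ×ˢ X, K.Rq⟩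

theorem cert_reduct (hw : w ∈ K.A) : K.cert.reduct w = (K.reduct w).cert :=
  cert_reduct_eq hw rfl (by simp only [reduct, Set.inter_assoc, Set.inter_self])

theorem cert_addR_reduct {R₀ : Set (α × α)} (hw : w ∈ K.A) (h₀ : ∀ p ∈ R₀, p.1 ≠ w) :
    (K.addR R₀).cert.reduct w = ((K.reduct w).addR R₀).cert :=
  cert_addR_reduct_eq hw rfl (by simp only [reduct, Set.inter_assoc, Set.inter_self]) h₀

/-- The IAF `I_att`. -/
def toAtIAF (I : IAF α) (w : α) : IAF α :=
  ⟨I.A ∪ I.Aq ∪ {w}, ∅, I.R, I.Rq ∪ {p | ∃ a ∈ I.Aq, p = (w, a)}⟩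

theorem WF.fst_ne_snd_ne_of_mem_Rq (hWF : I.WF) (hw : w ∉ I.A ∪ I.Aq) (he : e ∈ I.Rq) :
    e.1 ≠ w ∧ e.2 ≠ w :=
  ⟨fun h => hw (h ▸ (hWF.mem_of_mem_attacks (.inr he)).1),
    fun h => hw (h ▸ (hWF.mem_of_mem_attacks (.inr he)).2)⟩

theorem Rq_subset_toAtIAF : I.Rq ⊆ (I.toAtIAF w).Rq := Set.subset_union_left

theorem mem_toAtIAF_attacks {p : α × α} (hp : p ∈ (I.toAtIAF w).R ∪ (I.toAtIAF w).Rq) :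
    p ∈ I.R ∪ I.Rq ∨ p.1 = w ∧ p.2 ∈ I.Aq := by
  rcases hp with hp | hp | ⟨a, ha, rfl⟩
  · exact .inl (.inl hp)
  · exact .inl (.inr hp)
  · exact .inr ⟨rfl, ha⟩

/-- `w` attacks exactly the arguments of `I` missing from `J`, so that reducting by `w` gives
back `J`. -/
def liftToAt (I J : IAF α) (w : α) : IAF α :=
  ⟨I.A ∪ I.Aq ∪ {w}, ∅, J.R ∪ I.R ∪ {w} ×ˢ ((I.A ∪ I.Aq) \ J.A), J.Rq⟩

theorem liftToAt_partOf (hWF : I.WF) (hw : w ∉ I.A ∪ I.Aq) (hJ : J.PartOf I) :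
    (I.liftToAt J w).PartOf (I.toAtIAF w) := by
  obtain ⟨⟨-, hJdR, -, -⟩, hIJ, hJI, -, hJR, -, hJRq'⟩ := hJ
  have hRB : ∀ p ∈ J.R ∪ I.R, p.1 ∈ I.A ∪ I.Aq ∧ p.2 ∈ I.A ∪ I.Aq := fun p hp =>
    hWF.mem_of_mem_attacks (hp.elim (fun h => hJR h) .inl)
  have hwJRq : ∀ p ∈ J.Rq, p.1 ≠ w := fun _ hp => (hWF.fst_ne_snd_ne_of_mem_Rq hw (hJRq' hp)).1
  refine ⟨⟨Set.disjoint_empty _, ?_, ?_, ?_⟩, subset_rfl, Set.subset_union_left, ?_, ?_,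
    subset_rfl, fun p hp => .inl (hJRq' hp)⟩
  · refine Set.disjoint_left.2 ?_
    rintro p ((hp | hp) | ⟨hpw, -⟩) hpq
    · exact Set.disjoint_left.1 hJdR hp hpq
    · exact Set.disjoint_left.1 hWF.2.1 hp (hJRq' hpq)
    · exact hwJRq p hpq hpw
  · rintro p (hp | ⟨hpw, hpB, -⟩)
    · exact ⟨.inl (.inl (hRB p hp).1), .inl (.inl (hRB p hp).2)⟩
    · exact ⟨.inl (.inr hpw), .inl (.inl hpB)⟩
  · intro p hp
    have := hWF.mem_of_mem_attacks (.inr (hJRq' hp))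
    exact ⟨.inl (.inl this.1), .inl (.inl this.2)⟩
  · exact fun p hp => .inl (.inr hp.1)
  · rintro p ((hp | hp) | ⟨hpw, hpB, hpJ⟩)
    · exact (hJR hp).imp id .inl
    · exact .inl hp
    · refine .inr (.inr ⟨p.2, hpB.resolve_left fun h => hpJ (hIJ h), ?_⟩)
      exact Prod.ext (Set.mem_singleton_iff.1 hpw) rfl

theorem liftToAt_A_eq (hWF : I.WF) (hw : w ∉ I.A ∪ I.Aq) (hJ : J.PartOf I) :
    J.A = {a | a ∈ (I.liftToAt J w).A ∧ a ≠ w ∧ (w, a) ∉ (I.liftToAt J w).R} := by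
  obtain ⟨-, -, hJI, -, hJR, -, -⟩ := hJ
  ext a
  simp only [liftToAt, Set.mem_ofPred_eq, Set.mem_union, Set.mem_prod, Set.mem_singleton_iff,
    Set.mem_sdiff, true_and, not_or, not_and, not_not]
  constructor
  · intro ha
    have hwa : (w, a) ∉ J.R ∪ I.R := fun h =>
      hw (hWF.mem_of_mem_attacks (h.elim (fun h => hJR h) .inl)).1
    exact ⟨.inl (hJI ha), fun h => hw (h ▸ hJI ha), not_or.1 hwa, fun _ => ha⟩
  · rintro ⟨ha | ha, haw, -, h⟩
    · exact h ha
    · exact absurd ha haw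

theorem liftToAt_R_inter (hw : w ∉ I.A ∪ I.Aq) (hJ : J.PartOf I) :
    (I.liftToAt J w).R ∩ J.A ×ˢ J.A = J.R ∩ J.A ×ˢ J.A := by
  obtain ⟨-, -, hJI, hIR, -, -, -⟩ := hJ
  refine subset_antisymm ?_ fun p hp => ⟨.inl (.inl hp.1), hp.2⟩
  rintro p ⟨(hp | hp) | ⟨hpw, -⟩, hpA⟩
  · exact ⟨hp, hpA⟩
  · exact ⟨hIR ⟨hp, .inl hpA.1, .inl hpA.2⟩, hpA⟩
  · exact absurd (Set.mem_singleton_iff.1 hpw ▸ hJI hpA.1) hw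

theorem reduct_partOf (hWF : I.WF) (hw : w ∉ I.A ∪ I.Aq) (hK : K.PartOf (I.toAtIAF w))
    (hKAq : K.Aq = ∅) (hKRq : K.Rq ⊆ (K.reduct w).A ×ˢ (K.reduct w).A) :
    (K.reduct w).PartOf I := by
  obtain ⟨⟨-, hKdR, -, -⟩, hIK, hKI, hIRK, hKR, -, hKRqI⟩ := hK
  have hX : (K.reduct w).A ∪ (K.reduct w).Aq = (K.reduct w).A := by
    simp only [reduct, hKAq, Set.union_empty]
  have hnotw : ∀ p ∈ (K.reduct w).A ×ˢ (K.reduct w).A, p.1 ≠ w := fun p hp => hp.1.2.1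
  refine ⟨⟨by simp only [reduct, hKAq, Set.disjoint_empty],
    hKdR.mono_left Set.inter_subset_left, ?_, ?_⟩, ?_, ?_, ?_, ?_, ?_, ?_⟩
  · rw [hX]
    exact Set.inter_subset_right
  · rw [hX]
    exact hKRq
  · intro a ha
    refine ⟨hIK (.inl (.inl ha)), fun h => hw (h ▸ .inl ha), fun hwa => ?_⟩
    rcases mem_toAtIAF_attacks (hKR hwa) with h | h
    · exact hw (hWF.mem_of_mem_attacks h).1
    · exact Set.disjoint_left.1 hWF.1 ha h.2
  · rintro a ⟨ha, haw, -⟩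
    rcases hKI ha with (h | h) | h
    · exact h
    · exact absurd h haw
    · exact h.elim
  · rintro p ⟨hp, hpX⟩
    rw [hX] at hpX
    exact ⟨hIRK ⟨hp, .inl hpX.1.1, .inl hpX.2.1⟩, hpX⟩
  · rintro p ⟨hp, hpX⟩
    exact (mem_toAtIAF_attacks (hKR hp)).resolve_right fun h => hnotw p hpX h.1
  · simp only [reduct, hKAq, Set.empty_subset]
  · intro p hp
    rcases hKRqI hp with h | ⟨a, -, rfl⟩
    · exact h
    · exact absurd rfl (hnotw _ (hKRq hp))

/-- The pairs `(cert(J + e), cert(J − e))` over the partial completions `J` of `I` whose only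
uncertain element is `e`; note that `cert(J − e) = cert J`. -/
def attackCompletionPairs (I : IAF α) (e : α × α) : Set (AF α × AF α) :=
  {p | ∃ J : IAF α, J.PartOf I ∧ onlyUnc J (.att e) ∧ p = ((J.addR {e}).cert, J.cert)}

theorem att_mem_REplus_iff : Elem.att e ∈ REplus I S j ↔
    e ∈ I.Rq ∧ ∃ p ∈ I.attackCompletionPairs e, hasStatus p.1 S j ∧ ¬ hasStatus p.2 S j := by
  constructor
  · rintro ⟨he, J, hJ, hJe, h⟩
    exact ⟨he, _, ⟨J, hJ, hJe, rfl⟩, h⟩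
  · rintro ⟨he, _, ⟨J, hJ, hJe, rfl⟩, h⟩
    exact ⟨he, J, hJ, hJe, h⟩

theorem att_mem_REminus_iff : Elem.att e ∈ REminus I S j ↔
    e ∈ I.Rq ∧ ∃ p ∈ I.attackCompletionPairs e, hasStatus p.2 S j ∧ ¬ hasStatus p.1 S j := by
  constructor
  · rintro ⟨he, J, hJ, hJe, h⟩
    exact ⟨he, _, ⟨J, hJ, hJe, rfl⟩, h⟩
  · rintro ⟨he, _, ⟨J, hJ, hJe, rfl⟩, h⟩
    exact ⟨he, J, hJ, hJe, h⟩

theorem exists_toAtIAF_pair (hWF : I.WF) (hw : w ∉ I.A ∪ I.Aq) (he : e ∈ I.Rq) {p : AF α × AF α}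
    (hp : p ∈ I.attackCompletionPairs e) :
    ∃ q ∈ (I.toAtIAF w).attackCompletionPairs e, q.1.reduct w = p.1 ∧ q.2.reduct w = p.2 := by
  obtain ⟨J, hJ, ⟨-, hJRq⟩, rfl⟩ := hp
  have hwK : w ∈ (I.liftToAt J w).A := .inr rfl
  have hA := liftToAt_A_eq hWF hw hJ
  have hR := liftToAt_R_inter hw hJ
  refine ⟨_, ⟨I.liftToAt J w, liftToAt_partOf hWF hw hJ, ⟨rfl, hJRq⟩, rfl⟩, ?_, ?_⟩
  · exact cert_addR_reduct_eq hwK hA hR fun _ hp =>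
      (Set.mem_singleton_iff.1 hp) ▸ (hWF.fst_ne_snd_ne_of_mem_Rq hw he).1
  · exact cert_reduct_eq hwK hA hR

theorem toAtIAF_pair_cases (hWF : I.WF) (hw : w ∉ I.A ∪ I.Aq) (he : e ∈ I.Rq)
    {q : AF α × AF α} (hq : q ∈ (I.toAtIAF w).attackCompletionPairs e) :
    q.1.reduct w = q.2.reduct w ∨
      ∃ p ∈ I.attackCompletionPairs e, q.1.reduct w = p.1 ∧ q.2.reduct w = p.2 := by
  obtain ⟨K, hK, ⟨hKAq, hKRq⟩, rfl⟩ := hq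
  have hwK : w ∈ K.A := hK.A_subset (.inr rfl)
  have he₁ := (hWF.fst_ne_snd_ne_of_mem_Rq hw he).1
  dsimp only
  rw [cert_addR_reduct hwK fun _ hp => (Set.mem_singleton_iff.1 hp) ▸ he₁, cert_reduct hwK]
  by_cases heX : e ∈ (K.reduct w).A ×ˢ (K.reduct w).A
  · have hKRq' : K.Rq ⊆ (K.reduct w).A ×ˢ (K.reduct w).A := hKRq ▸ Set.singleton_subset_iff.2 heX
    exact .inr ⟨_, ⟨K.reduct w, reduct_partOf hWF hw hK hKAq hKRq', ⟨hKAq, hKRq⟩, rfl⟩, rfl, rfl⟩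
  · exact .inl (cert_addR_of_notMem heX)

theorem hasStatus_toAtIAF_pair_iff (hWF : I.WF) (hw : w ∉ I.A ∪ I.Aq) (he : e ∈ I.Rq)
    {q : AF α × AF α} (hq : q ∈ (I.toAtIAF w).attackCompletionPairs e) (hwS : w ∉ S)
    (j : VStatus) :
    (hasStatus q.1 (insert w S) j ↔ hasStatus (q.1.reduct w) S j) ∧
      (hasStatus q.2 (insert w S) j ↔ hasStatus (q.2.reduct w) S j) := by
  obtain ⟨K, hK, -, rfl⟩ := hq
  have hwK : w ∈ K.A := hK.A_subset (.inr rfl)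
  have hwu : ∀ b, (b, w) ∉ K.R := fun b h => by
    rcases mem_toAtIAF_attacks (hK.R_subset h) with h | h
    · exact hw (hWF.mem_of_mem_attacks h).2
    · exact hw (.inr h.2)
  have he₂ := (hWF.fst_ne_snd_ne_of_mem_Rq hw he).2
  have hwu' : ∀ b, (b, w) ∉ K.R ∪ {e} := by
    rintro b (h | rfl)
    · exact hwu b h
    · exact he₂ rfl
  exact ⟨hasStatus_cert_insert_iff (K := K.addR {e}) hwK hwu' hwS j,
    hasStatus_cert_insert_iff hwK hwu hwS j⟩

theorem exists_toAtIAF_pair_iff (hWF : I.WF) (hw : w ∉ I.A ∪ I.Aq) (he : e ∈ I.Rq)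
    (hwS : w ∉ S) (j : VStatus) (Ψ : Prop → Prop → Prop) (hΨ : ∀ P, ¬ Ψ P P) :
    (∃ p ∈ I.attackCompletionPairs e, Ψ (hasStatus p.1 S j) (hasStatus p.2 S j)) ↔
      ∃ q ∈ (I.toAtIAF w).attackCompletionPairs e,
        Ψ (hasStatus q.1 (insert w S) j) (hasStatus q.2 (insert w S) j) := by
  have htr := fun q (hq : q ∈ _) => hasStatus_toAtIAF_pair_iff hWF hw he hq hwS j
  constructor
  · rintro ⟨p, hp, hΨp⟩
    obtain ⟨q, hq, h₁, h₂⟩ := exists_toAtIAF_pair hWF hw he hp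
    refine ⟨q, hq, ?_⟩
    rwa [(htr q hq).1, (htr q hq).2, h₁, h₂]
  · rintro ⟨q, hq, hΨq⟩
    rw [(htr q hq).1, (htr q hq).2] at hΨq
    rcases toAtIAF_pair_cases hWF hw he hq with h | ⟨p, hp, h₁, h₂⟩
    · rw [h] at hΨq
      exact absurd hΨq (hΨ _)
    · rw [h₁, h₂] at hΨq
      exact ⟨p, hp, hΨq⟩

end IAF

/-- reduction to an AtIAF preserves relevance of uncertain attacks. -/
theorem stmt1 {α : Type u} (I : IAF α) (S : Set α) (j : VStatus) (w : α)
    (hWF : I.WF) (hS : S ⊆ I.A ∪ I.Aq) (hw : w ∉ I.A ∪ I.Aq)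
    (Iatt : IAF α)
    (hIatt : Iatt = ⟨I.A ∪ I.Aq ∪ {w}, ∅, I.R, I.Rq ∪ {p | ∃ a ∈ I.Aq, p = (w, a)}⟩) :
    ∀ e ∈ I.Rq,
      (Elem.att e ∈ REplus I S j ↔ Elem.att e ∈ REplus Iatt (S ∪ {w}) j) ∧
      (Elem.att e ∈ REminus I S j ↔ Elem.att e ∈ REminus Iatt (S ∪ {w}) j) := by
  obtain rfl : Iatt = I.toAtIAF w := hIatt
  intro e he
  have hwS : w ∉ S := fun h => hw (hS h)
  have hpairs := fun Ψ hΨ => and_congr (iff_of_true he (IAF.Rq_subset_toAtIAF (w := w) he))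
    (IAF.exists_toAtIAF_pair_iff hWF hw he hwS j Ψ hΨ)
  rw [Set.union_singleton, IAF.att_mem_REplus_iff, IAF.att_mem_REplus_iff,
    IAF.att_mem_REminus_iff, IAF.att_mem_REminus_iff]
  exact ⟨hpairs (fun P Q => P ∧ ¬ Q) fun _ h => h.2 h.1,
    hpairs (fun P Q => Q ∧ ¬ P) fun _ h => h.2 h.1⟩
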